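/- The set S_ac = { v ∈ C([0,T] : ℝ^∞) : there exists û ∈ L²([0,T] ; ℓ₂) such that v(t) = ∫₀^t û(s) ds for all t ∈ [0,T] } is a Borel-measurable subset of C([0,T] : ℝ^∞). -/

import Mathlib

/-!
The map sending `f ∈ L²([0,T]; ℓ₂)` to its primitive `t ↦ ∫₀ᵗ f`, read coordinatewise in `ℝ^∞`,
is continuous, since the primitive is bounded uniformly by the `L¹` norm and hence by the `L²`
norm of `f`, and injective, since by the Lebesgue differentiation theorem the primitive
determines `f` almost everywhere. Its image is exactly `S_ac`, and `L²([0,T]; ℓ₂)` is Polish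
because `ℓ₂` is separable, so `S_ac` is Borel by the Lusin–Souslin theorem.
-/

open MeasureTheory Filter Set Topology TopologicalSpace
open scoped ENNReal

theorem HilbertBasis.separableSpace {ι 𝕜 E : Type*} [Countable ι] [RCLike 𝕜]
    [NormedAddCommGroup E] [InnerProductSpace 𝕜 E] (b : HilbertBasis ι 𝕜 E) :
    SeparableSpace E := by
  refine isSeparable_univ_iff.mp ?_
  have hclosure : closure (Submodule.span 𝕜 (range b) : Set E) = univ := by
    rw [← Submodule.topologicalClosure_coe, b.dense_span, Submodule.top_coe]
  exact hclosure ▸ (countable_range b).isSeparable.span.closure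

instance lp.separableSpace_two {ι 𝕜 : Type*} [Countable ι] [RCLike 𝕜] :
    SeparableSpace (lp (fun _ : ι => 𝕜) 2) :=
  (default : HilbertBasis ι 𝕜 (lp (fun _ : ι => 𝕜) 2)).separableSpace

namespace MeasureTheory

variable {α E : Type*} [MeasurableSpace α] [NormedAddCommGroup E] {μ : Measure α}
  {p : ℝ≥0∞}

theorem Lp.integral_norm_le_mul_norm [IsFiniteMeasure μ] [Fact (1 ≤ p)] (f : Lp E p μ) :
    ∫ x, ‖f x‖ ∂μ ≤ (μ univ ^ (1 - p.toReal⁻¹)).toReal * ‖f‖ := by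
  have hexp : 0 ≤ 1 - p.toReal⁻¹ := by
    rw [sub_nonneg, ← ENNReal.toReal_inv]
    simpa using ENNReal.toReal_mono ENNReal.one_ne_top (ENNReal.inv_le_one.2 (Fact.out : 1 ≤ p))
  have hfin : μ univ ^ (1 - p.toReal⁻¹) ≠ ∞ :=
    ENNReal.rpow_ne_top_of_nonneg hexp (measure_ne_top μ univ)
  have hholder : eLpNorm f 1 μ ≤ eLpNorm f p μ * μ univ ^ (1 - p.toReal⁻¹) := by
    simpa using eLpNorm_le_eLpNorm_mul_rpow_measure_univ (Fact.out : 1 ≤ p)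
      (Lp.aestronglyMeasurable f)
  calc ∫ x, ‖f x‖ ∂μ = (eLpNorm f 1 μ).toReal := by
        rw [integral_norm_eq_lintegral_enorm (Lp.aestronglyMeasurable f),
          eLpNorm_one_eq_lintegral_enorm]
    _ ≤ (eLpNorm f p μ * μ univ ^ (1 - p.toReal⁻¹)).toReal :=
        ENNReal.toReal_mono (ENNReal.mul_ne_top (Lp.eLpNorm_ne_top f) hfin) hholder
    _ = _ := by rw [ENNReal.toReal_mul, mul_comm, Lp.norm_def]

variable {a b : ℝ}

section IntegrableOn

variable [Fact (1 ≤ p)]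

theorem Lp.integrableOn_Icc (f : Lp E p (volume.restrict (Icc a b))) : IntegrableOn f (Icc a b) :=
  (Lp.memLp f).integrable Fact.out

theorem Lp.integrableOn_Icc_of_le (f : Lp E p (volume.restrict (Icc a b))) {t : ℝ} (ht : t ≤ b) :
    IntegrableOn f (Icc a t) :=
  (Lp.integrableOn_Icc f).mono_set (Icc_subset_Icc_right ht)

end IntegrableOn

variable [NormedSpace ℝ E]

theorem setIntegral_Icc_congr_of_ae_restrict {f g : ℝ → E}
    (hfg : f =ᵐ[volume.restrict (Icc a b)] g) {t : ℝ} (ht : t ≤ b) :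
    ∫ s in Icc a t, f s = ∫ s in Icc a t, g s :=
  integral_congr_ae (ae_restrict_of_ae_restrict_of_subset (Icc_subset_Icc_right ht) hfg)

variable [Fact (1 ≤ p)]

noncomputable def Lp.primitiveIcc : Lp E p (volume.restrict (Icc a b)) →L[ℝ] C(Icc a b, E) :=
  LinearMap.mkContinuous
    { toFun f := ⟨fun t => ∫ s in Icc a t, f s,
        (intervalIntegral.continuousOn_primitive_Icc (Lp.integrableOn_Icc f)).domRestrict⟩
      map_add' f g := by
        ext t
        change ∫ s in Icc a t, (f + g) s = (∫ s in Icc a t, f s) + ∫ s in Icc a t, g s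
        rw [setIntegral_Icc_congr_of_ae_restrict (Lp.coeFn_add f g) t.2.2, Pi.add_def,
          integral_add (Lp.integrableOn_Icc_of_le f t.2.2) (Lp.integrableOn_Icc_of_le g t.2.2)]
      map_smul' c f := by
        ext t
        change ∫ s in Icc a t, (c • f) s = c • ∫ s in Icc a t, f s
        rw [setIntegral_Icc_congr_of_ae_restrict (Lp.coeFn_smul c f) t.2.2, Pi.smul_def,
          integral_smul] }
    ((volume.restrict (Icc a b) univ ^ (1 - p.toReal⁻¹)).toReal)
    fun f => (ContinuousMap.norm_le _ (by positivity)).2 fun t => by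
      calc ‖∫ s in Icc a t, f s‖ ≤ ∫ s in Icc a t, ‖f s‖ := norm_integral_le_integral_norm _
        _ ≤ ∫ s in Icc a b, ‖f s‖ :=
          setIntegral_mono_set (Lp.integrableOn_Icc f).norm (.of_forall fun _ => norm_nonneg _)
            (Icc_subset_Icc_right t.2.2).eventuallyLE
        _ ≤ _ := Lp.integral_norm_le_mul_norm f

theorem Lp.primitiveIcc_apply (f : Lp E p (volume.restrict (Icc a b))) (t : Icc a b) :
    Lp.primitiveIcc f t = ∫ s in Icc a t, f s :=
  rfl

variable [CompleteSpace E]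

theorem ae_restrict_Icc_eq_zero_of_forall_setIntegral_Icc_eq_zero {f : ℝ → E}
    (hf : IntegrableOn f (Icc a b)) (h : ∀ t ∈ Icc a b, ∫ s in Icc a t, f s = 0) :
    f =ᵐ[volume.restrict (Icc a b)] 0 := by
  rcases lt_or_ge b a with hba | hab
  · simp [Icc_eq_empty_of_lt hba, EventuallyEq]
  have hderiv := ((intervalIntegrable_iff_integrableOn_Icc_of_le hab).2 hf).ae_hasDerivAt_integral
  rw [EventuallyEq, ← Measure.restrict_congr_set Ioo_ae_eq_Icc, ae_restrict_iff' measurableSet_Ioo]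
  filter_upwards [hderiv] with x hx hxI
  have hprimitive : (fun y => ∫ s in a..y, f s) =ᶠ[𝓝 x] fun _ => 0 := by
    filter_upwards [Ioo_mem_nhds hxI.1 hxI.2] with y hy
    rw [intervalIntegral.integral_of_le hy.1.le, ← integral_Icc_eq_integral_Ioc]
    exact h y (Ioo_subset_Icc_self hy)
  exact (hx (Icc_subset_uIcc (Ioo_subset_Icc_self hxI)) a left_mem_uIcc).unique
    ((hasDerivAt_const x 0).congr_of_eventuallyEq hprimitive)

theorem Lp.injective_primitiveIcc :
    Function.Injective (Lp.primitiveIcc : Lp E p (volume.restrict (Icc a b)) → C(Icc a b, E)) := by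
  refine (injective_iff_map_eq_zero _).2 fun f hf => Lp.eq_zero_iff_ae_eq_zero.2 ?_
  refine ae_restrict_Icc_eq_zero_of_forall_setIntegral_Icc_eq_zero (Lp.integrableOn_Icc f)
    fun t ht => ?_
  rw [← Lp.primitiveIcc_apply f ⟨t, ht⟩, hf, ContinuousMap.zero_apply]

end MeasureTheory

theorem stmt_18 (T : ℝ) :
    MeasurableSet[borel C(Icc (0:ℝ) T, ℕ → ℝ)]
      {v : C(Icc (0:ℝ) T, ℕ → ℝ) |
        ∃ u : ℝ → lp (fun _ : ℕ => ℝ) 2,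
          MemLp u 2 ((volume : Measure ℝ).restrict (Icc (0:ℝ) T)) ∧
          ∀ t : Icc (0:ℝ) T, ∀ i : ℕ,
            v t i = (↑(∫ s in Icc (0:ℝ) (t:ℝ), u s) : ℕ → ℝ) i} := by
  borelize C(Icc (0:ℝ) T, ℕ → ℝ)
  -- makes `Lp _ 2 _` second countable, hence Polish
  have : Fact ((2 : ℝ≥0∞) ≠ ∞) := ⟨ENNReal.ofNat_ne_top⟩
  let coe : C(lp (fun _ : ℕ => ℝ) 2, ℕ → ℝ) := ⟨(↑), lp.uniformContinuous_coe.continuous⟩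
  let path : Lp (lp (fun _ : ℕ => ℝ) 2) 2 (volume.restrict (Icc (0:ℝ) T)) →
      C(Icc (0:ℝ) T, ℕ → ℝ) := fun f => coe.comp (Lp.primitiveIcc f)
  have hcont : Continuous path :=
    (ContinuousMap.continuous_postcomp coe).comp Lp.primitiveIcc.continuous
  have hinj : Function.Injective path := fun f g hfg =>
    Lp.injective_primitiveIcc (ContinuousMap.ext fun t => lp.ext (DFunLike.congr_fun hfg t))
  convert measurableSet_range_of_continuous_injective hcont hinj using 1
  ext v
  constructor
  · rintro ⟨u, hu, hv⟩
    refine ⟨hu.toLp u, ContinuousMap.ext fun t => funext fun i => ?_⟩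
    rw [hv t i, ← setIntegral_Icc_congr_of_ae_restrict hu.coeFn_toLp t.2.2]
    rfl
  · rintro ⟨f, rfl⟩
    exact ⟨f, Lp.memLp f, fun t i => rfl⟩
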